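/- arXiv:2107.08537 — 6 statements merged into one kernel-verified Lean document; each statement's English description precedes it below -/
import Mathlib

section
/- Let g be a generator of M and let x, y ∈ M. Then a real number r ≥ 0 is a regularized rate from x to y if and only if for every δ > 0 there exists n ∈ ℕ with n ≥ 1 such that y^⌈r·n⌉ ≤ x^n · g^⌊δ·n⌋. -/
/-- A functional on a preordered commutative monoid: additive and monotone. -/
def IsFunctional {M : Type*} [CommMonoid M] [Preorder M] (f : M → ℝ) : Prop :=
  (∀ x y : M, f (x * y) = f x + f y) ∧ (∀ x y : M, x ≤ y → f x ≤ f y)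

/-- `g` is a generator: every element is below some power of `g`. -/
def IsGenerator {M : Type*} [CommMonoid M] [Preorder M] (g : M) : Prop :=
  ∀ x : M, ∃ n : ℕ, x ≤ g ^ n

/-- `r` is a regularized rate from `x` to `y` (relative to the generator `g`). -/
def IsRegularizedRate {M : Type*} [CommMonoid M] [Preorder M] (g x y : M) (r : ℝ) : Prop :=
  ∀ δ : ℝ, 0 < δ → ∀ U ∈ nhds r, ∃ m n : ℕ, 1 ≤ n ∧ ((m : ℝ) / (n : ℝ)) ∈ U ∧
    ∃ d : ℕ, (d : ℝ) ≤ δ * max (m : ℝ) (n : ℝ) ∧ y ^ m ≤ x ^ n * g ^ d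

section
set_option linter.unusedSectionVars false
variable {M : Type*} [CommMonoid M] [Preorder M]
  (hmul : ∀ x y z : M, x ≤ y → x * z ≤ y * z)
  (hone : ∀ x : M, (1 : M) ≤ x)
include hmul hone

lemma aux_le_mul (a b : M) : a ≤ a * b := by
  have := hmul 1 b a (hone b)
  simpa [one_mul, mul_comm] using this

lemma aux_mul_le_mul {a b c d : M} (h1 : a ≤ b) (h2 : c ≤ d) : a * c ≤ b * d := by
  calc a * c ≤ b * c := hmul _ _ _ h1
    _ = c * b := mul_comm _ _
    _ ≤ d * b := hmul _ _ _ h2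
    _ = b * d := mul_comm _ _

lemma aux_pow_le_pow {a : M} {i j : ℕ} (h : i ≤ j) : a ^ i ≤ a ^ j := by
  have : a ^ j = a ^ i * a ^ (j - i) := by rw [← pow_add, Nat.add_sub_cancel' h]
  rw [this]; exact aux_le_mul hmul hone _ _

lemma aux_pow_le_pow_of_le {a b : M} (h : a ≤ b) (k : ℕ) : a ^ k ≤ b ^ k := by
  induction k with
  | zero => simp
  | succ k ih =>
    rw [pow_succ, pow_succ]
    exact aux_mul_le_mul hmul hone ih h

lemma aux_fill {y g : M} {a : ℕ} (hy : y ≤ g ^ a) (p q : ℕ) :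
    y ^ p ≤ y ^ q * g ^ (a * (p - q)) := by
  rcases le_or_gt p q with h | h
  · simp only [Nat.sub_eq_zero_of_le h, Nat.mul_zero, pow_zero, mul_one]
    exact aux_pow_le_pow hmul hone h
  · have : y ^ p = y ^ q * y ^ (p - q) := by rw [← pow_add, Nat.add_sub_cancel' h.le]
    rw [this]
    have h2 : y ^ (p - q) ≤ g ^ (a * (p - q)) := by
      rw [pow_mul]
      exact aux_pow_le_pow_of_le hmul hone hy _
    calc y ^ q * y ^ (p-q) = y ^ (p-q) * y ^ q := mul_comm _ _
      _ ≤ g ^ (a * (p-q)) * y ^ q := hmul _ _ _ h2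
      _ = y ^ q * g ^ (a * (p-q)) := mul_comm _ _

end

set_option maxHeartbeats 1000000 in
theorem statement0 {M : Type*} [CommMonoid M] [Preorder M]
    (hmul : ∀ x y z : M, x ≤ y → x * z ≤ y * z)
    (hone : ∀ x : M, (1 : M) ≤ x)
    (g : M) (hg : IsGenerator g) (x y : M) (r : ℝ) (hr : 0 ≤ r) :
    IsRegularizedRate g x y r ↔
      ∀ δ : ℝ, 0 < δ → ∃ n : ℕ, 1 ≤ n ∧
        y ^ (⌈r * (n : ℝ)⌉₊) ≤ x ^ n * g ^ (⌊δ * (n : ℝ)⌋₊) := by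
  constructor
  · intro h δ hδ
    obtain ⟨a, ha⟩ := hg y
    set ε : ℝ := δ / (4 * ((a:ℝ) + 1)) with hεdef
    have hεpos : 0 < ε := by positivity
    set δ' : ℝ := δ / (4 * (r + 2 + ε)) with hδ'def
    have hδ'pos : 0 < δ' := by positivity
    obtain ⟨m, n, hn, hmem, d, hd, hle⟩ :=
      h δ' hδ'pos (Set.Ioo (r - ε) (r + ε)) (Ioo_mem_nhds (by linarith) (by linarith))
    obtain ⟨hm1, hm2⟩ := hmem
    set k : ℕ := ⌈2 * (a:ℝ) / δ⌉₊ + 1 with hkdef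
    have hk1 : 1 ≤ k := Nat.le_add_left 1 _
    set N : ℕ := k * n with hNdef
    have hN1 : 1 ≤ N := Nat.one_le_iff_ne_zero.mpr (by positivity)
    refine ⟨N, hN1, ?_⟩
    -- real cast facts
    have hnpos : (0:ℝ) < (n:ℝ) := by exact_mod_cast hn
    have hNcast : (N:ℝ) = (k:ℝ) * (n:ℝ) := by rw [hNdef]; push_cast; ring
    have hkR : (0:ℝ) < (k:ℝ) := by exact_mod_cast hk1
    have hNpos : (0:ℝ) < (N:ℝ) := by rw [hNcast]; positivity
    have hNk : (k:ℝ) ≤ (N:ℝ) := by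
      have : k ≤ N := Nat.le_mul_of_pos_right k hn
      exact_mod_cast this
    have hka : 2 * (a:ℝ) / δ ≤ (k:ℝ) := by
      have h1 := Nat.le_ceil (2 * (a:ℝ) / δ)
      have h2 : ((⌈2 * (a:ℝ) / δ⌉₊:ℝ)) ≤ (k:ℝ) := by
        rw [hkdef]; push_cast; linarith
      linarith
    have haN : 2 * (a:ℝ) ≤ δ * (N:ℝ) := by
      rw [div_le_iff₀ hδ] at hka
      nlinarith
    -- bounds on m
    have hmlt : (m:ℝ) < (r + ε) * (n:ℝ) := by
      rw [div_lt_iff₀ hnpos] at hm2; exact hm2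
    have hmgt : (r - ε) * (n:ℝ) < (m:ℝ) := by
      rw [lt_div_iff₀ hnpos] at hm1; exact hm1
    -- bound on d
    have hmax : max (m:ℝ) (n:ℝ) ≤ (r + 1 + ε) * (n:ℝ) := by
      apply max_le
      · nlinarith
      · nlinarith
    have hδ'bound : δ' * (r + 1 + ε) ≤ δ / 4 := by
      rw [hδ'def, div_mul_eq_mul_div, div_le_div_iff₀ (by positivity) (by norm_num : (0:ℝ) < 4)]
      nlinarith
    have hdN : (d:ℝ) * (k:ℝ) ≤ δ / 4 * (N:ℝ) := by
      have h1 : (d:ℝ) ≤ δ' * ((r + 1 + ε) * (n:ℝ)) := by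
        calc (d:ℝ) ≤ δ' * max (m:ℝ) (n:ℝ) := hd
          _ ≤ δ' * ((r + 1 + ε) * (n:ℝ)) :=
            mul_le_mul_of_nonneg_left hmax hδ'pos.le
      rw [hNcast]
      nlinarith
    have haε : (a:ℝ) * ε ≤ δ / 4 := by
      have h4 : (0:ℝ) < 4 * ((a:ℝ) + 1) := by positivity
      have ha0 : (0:ℝ) ≤ (a:ℝ) := Nat.cast_nonneg a
      rw [hεdef, mul_div_assoc', div_le_div_iff₀ h4 (by norm_num : (0:ℝ) < 4)]
      nlinarith
    -- the exponent
    set e : ℕ := k * d + a * (⌈r * (N:ℝ)⌉₊ - k * m) with hedef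
    have heR : (e:ℝ) ≤ δ * (N:ℝ) := by
      rcases le_or_gt ⌈r * (N:ℝ)⌉₊ (k * m) with hc | hc
      · have : (e:ℝ) = (k:ℝ) * (d:ℝ) := by
          rw [hedef, Nat.sub_eq_zero_of_le hc]; push_cast; ring
        rw [this]
        nlinarith
      · have hsub : ((⌈r * (N:ℝ)⌉₊ - k * m : ℕ):ℝ) = (⌈r * (N:ℝ)⌉₊:ℝ) - (k:ℝ) * (m:ℝ) := by
          rw [Nat.cast_sub hc.le]; push_cast; ring
        have hceil : (⌈r * (N:ℝ)⌉₊:ℝ) < r * (N:ℝ) + 1 :=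
          Nat.ceil_lt_add_one (by positivity)
        have hkm : (r - ε) * (N:ℝ) < (k:ℝ) * (m:ℝ) := by
          rw [hNcast]; nlinarith
        have hsubbound : ((⌈r * (N:ℝ)⌉₊ - k * m : ℕ):ℝ) ≤ ε * (N:ℝ) + 1 := by
          rw [hsub]; nlinarith
        have heval : (e:ℝ) = (k:ℝ) * (d:ℝ) + (a:ℝ) * ((⌈r * (N:ℝ)⌉₊ - k * m : ℕ):ℝ) := by
          rw [hedef]; push_cast; ring
        have haεN : (a:ℝ) * (ε * (N:ℝ) + 1) ≤ δ / 4 * (N:ℝ) + (a:ℝ) := by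
          nlinarith
        rw [heval]
        have ha0 : (0:ℝ) ≤ (a:ℝ) := Nat.cast_nonneg a
        have h5 : (a:ℝ) * ((⌈r * (N:ℝ)⌉₊ - k * m : ℕ):ℝ) ≤ (a:ℝ) * (ε * (N:ℝ) + 1) :=
          mul_le_mul_of_nonneg_left hsubbound ha0
        nlinarith
    have hefloor : e ≤ ⌊δ * (N:ℝ)⌋₊ := Nat.le_floor heR
    -- the monoid chain
    have hpow : y ^ (k * m) ≤ x ^ N * g ^ (k * d) := by
      calc y ^ (k * m) = (y ^ m) ^ k := by rw [mul_comm, pow_mul]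
        _ ≤ (x ^ n * g ^ d) ^ k := aux_pow_le_pow_of_le hmul hone hle k
        _ = x ^ N * g ^ (k * d) := by
            rw [mul_pow, ← pow_mul, ← pow_mul, hNdef]; ring_nf
    have hfill := aux_fill hmul hone ha (⌈r * (N:ℝ)⌉₊) (k * m)
    calc y ^ ⌈r * (N:ℝ)⌉₊
        ≤ y ^ (k * m) * g ^ (a * (⌈r * (N:ℝ)⌉₊ - k * m)) := hfill
      _ ≤ (x ^ N * g ^ (k * d)) * g ^ (a * (⌈r * (N:ℝ)⌉₊ - k * m)) := hmul _ _ _ hpow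
      _ = x ^ N * g ^ e := by rw [mul_assoc, ← pow_add, hedef]
      _ ≤ x ^ N * g ^ ⌊δ * (N:ℝ)⌋₊ := by
          have h6 : g ^ e ≤ g ^ ⌊δ * (N:ℝ)⌋₊ := aux_pow_le_pow hmul hone hefloor
          calc x ^ N * g ^ e = g ^ e * x ^ N := mul_comm _ _
            _ ≤ g ^ ⌊δ * (N:ℝ)⌋₊ * x ^ N := hmul _ _ _ h6
            _ = x ^ N * g ^ ⌊δ * (N:ℝ)⌋₊ := mul_comm _ _
  · intro h δ hδ U hU
    obtain ⟨ε, hε, hball⟩ := Metric.mem_nhds_iff.mp hU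
    obtain ⟨n, hn, hle⟩ := h δ hδ
    set k : ℕ := ⌈1/ε⌉₊ + 1 with hk
    have hk1 : 1 ≤ k := Nat.le_add_left 1 _
    set N : ℕ := k * n with hN
    have hN1 : 1 ≤ N := Nat.one_le_iff_ne_zero.mpr (by positivity)
    have hNk : (k : ℝ) ≤ (N : ℝ) := by
      have : k ≤ N := Nat.le_mul_of_pos_right k hn
      exact_mod_cast this
    have hNpos : (0:ℝ) < (N:ℝ) := by
      have : (1:ℝ) ≤ (N:ℝ) := by exact_mod_cast hN1
      linarith
    have hkε : 1/ε < (k:ℝ) := by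
      have := Nat.le_ceil (1/ε)
      have h2 : ((⌈1/ε⌉₊ : ℝ)) < (k:ℝ) := by
        rw [hk]; push_cast; linarith
      linarith
    refine ⟨⌈r * (N:ℝ)⌉₊, N, hN1, ?_, k * ⌊δ * (n:ℝ)⌋₊, ?_, ?_⟩
    · apply hball
      rw [Metric.mem_ball, Real.dist_eq, abs_lt]
      have hceil_lo : r * (N:ℝ) ≤ (⌈r * (N:ℝ)⌉₊ : ℝ) := Nat.le_ceil _
      have hceil_hi : (⌈r * (N:ℝ)⌉₊ : ℝ) < r * (N:ℝ) + 1 :=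
        Nat.ceil_lt_add_one (by positivity)
      have hinv : 1/(N:ℝ) < ε := by
        rw [div_lt_iff₀ hNpos]
        have : 1/ε < (N:ℝ) := lt_of_lt_of_le hkε hNk
        rw [div_lt_iff₀ hε] at this
        linarith [this]
      constructor
      · have : r ≤ (⌈r * (N:ℝ)⌉₊ : ℝ) / (N:ℝ) := by
          rw [le_div_iff₀ hNpos]; linarith [hceil_lo]
        linarith
      · have : (⌈r * (N:ℝ)⌉₊ : ℝ) / (N:ℝ) < r + 1/(N:ℝ) := by
          rw [div_lt_iff₀ hNpos]
          have : (r + 1/(N:ℝ)) * (N:ℝ) = r * N + 1 := by field_simp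
          rw [this]; exact hceil_hi
        linarith
    · have h1 : ((k * ⌊δ * (n:ℝ)⌋₊ : ℕ) : ℝ) ≤ (k:ℝ) * (δ * n) := by
        push_cast
        have := Nat.floor_le (a := δ * (n:ℝ)) (by positivity)
        have hk0 : (0:ℝ) ≤ (k:ℝ) := by positivity
        nlinarith
      have h2 : (k:ℝ) * (δ * n) = δ * (N:ℝ) := by rw [hN]; push_cast; ring
      calc ((k * ⌊δ * (n:ℝ)⌋₊ : ℕ) : ℝ) ≤ δ * (N:ℝ) := by rw [← h2]; exact h1
        _ ≤ δ * max (⌈r * (N:ℝ)⌉₊ : ℝ) (N:ℝ) :=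
          mul_le_mul_of_nonneg_left (le_max_right _ _) hδ.le
    · have hmceil : ⌈r * (N:ℝ)⌉₊ ≤ k * ⌈r * (n:ℝ)⌉₊ := by
        rw [Nat.ceil_le]
        push_cast
        have := Nat.le_ceil (r * (n:ℝ))
        have hk0 : (0:ℝ) ≤ (k:ℝ) := by positivity
        rw [hN]; push_cast
        nlinarith
      calc y ^ ⌈r * (N:ℝ)⌉₊ ≤ y ^ (k * ⌈r * (n:ℝ)⌉₊) := aux_pow_le_pow hmul hone hmceil
        _ = (y ^ ⌈r * (n:ℝ)⌉₊) ^ k := by rw [mul_comm, pow_mul]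
        _ ≤ (x ^ n * g ^ ⌊δ * (n:ℝ)⌋₊) ^ k := aux_pow_le_pow_of_le hmul hone hle k
        _ = x ^ N * g ^ (k * ⌊δ * (n:ℝ)⌋₊) := by
            rw [mul_pow, ← pow_mul, ← pow_mul, hN]
            ring_nf
end

section
/- Let g be a generator of M, let x, y ∈ M, let r ≥ 0 be a regularized rate from x to y, and let f be a functional on M. Then f(x) ≥ r·f(y). -/
/-!
Applying `f` to a witness `y ^ m ≤ x ^ n * g ^ d` of the rate and dividing by `n` gives
`q * f y ≤ f x + δ * max q 1 * f g` with `q = m / n`. This inequality is closed in `q`, so it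
passes to the limit `q = r`; letting `δ → 0` then gives `r * f y ≤ f x`.
-/

open Filter Topology

theorem le_of_forall_pos_le_add_mul {a b c : ℝ} (h : ∀ δ : ℝ, 0 < δ → a ≤ b + δ * c) :
    a ≤ b := by
  have hlim : Tendsto (fun δ : ℝ => b + δ * c) (𝓝[>] 0) (𝓝 b) := by
    have : Continuous fun δ : ℝ => b + δ * c := by fun_prop
    simpa using (this.tendsto 0).mono_left nhdsWithin_le_nhds
  exact ge_of_tendsto hlim (eventually_nhdsWithin_of_forall h)

namespace IsFunctional

variable {M : Type*} [CommMonoid M] [Preorder M] {f : M → ℝ}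

theorem map_one (hf : IsFunctional f) : f 1 = 0 := by
  have := hf.1 1 1
  rw [mul_one] at this
  linarith

theorem map_pow (hf : IsFunctional f) (a : M) (k : ℕ) : f (a ^ k) = k * f a := by
  induction k with
  | zero => simp [hf.map_one]
  | succ k ih => rw [pow_succ, hf.1, ih]; push_cast; ring

theorem nonneg (hf : IsFunctional f) (hone : ∀ x : M, (1 : M) ≤ x) (a : M) : 0 ≤ f a :=
  hf.map_one ▸ hf.2 _ _ (hone a)

theorem div_mul_le_of_pow_le (hf : IsFunctional f) (hone : ∀ x : M, (1 : M) ≤ x)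
    {g x y : M} {m n d : ℕ} {δ : ℝ} (hn : 1 ≤ n) (hd : (d : ℝ) ≤ δ * max (m : ℝ) n)
    (h : y ^ m ≤ x ^ n * g ^ d) :
    (m / n : ℝ) * f y ≤ f x + δ * max (m / n : ℝ) 1 * f g := by
  have hn : (0 : ℝ) < n := by exact_mod_cast hn
  have hfunctional : (m : ℝ) * f y ≤ n * f x + d * f g := by
    simpa only [hf.1, hf.map_pow] using hf.2 _ _ h
  have hmax : max (m : ℝ) n = n * max (m / n : ℝ) 1 := by
    rw [mul_max_of_nonneg _ _ hn.le, mul_div_cancel₀ _ hn.ne', mul_one]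
  have hgen : (d : ℝ) * f g ≤ n * (δ * max (m / n : ℝ) 1 * f g) := by
    calc (d : ℝ) * f g ≤ δ * max (m : ℝ) n * f g :=
          mul_le_mul_of_nonneg_right hd (hf.nonneg hone g)
      _ = n * (δ * max (m / n : ℝ) 1 * f g) := by rw [hmax]; ring
  rw [div_mul_eq_mul_div, div_le_iff₀ hn]
  linarith

end IsFunctional

theorem IsRegularizedRate.mul_le_add {M : Type*} [CommMonoid M] [Preorder M]
    {f : M → ℝ} (hf : IsFunctional f) (hone : ∀ x : M, (1 : M) ≤ x) {g x y : M} {r : ℝ}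
    (hrate : IsRegularizedRate g x y r) {δ : ℝ} (hδ : 0 < δ) :
    r * f y ≤ f x + δ * max r 1 * f g := by
  let S : Set ℝ := {q | q * f y ≤ f x + δ * max q 1 * f g}
  have hS : IsClosed S := isClosed_le (by fun_prop) (by fun_prop)
  suffices r ∈ closure S by rwa [hS.closure_eq] at this
  refine mem_closure_iff_nhds.2 fun U hU => ?_
  obtain ⟨m, n, hn, hmU, d, hd, hle⟩ := hrate δ hδ U hU
  exact ⟨_, hmU, hf.div_mul_le_of_pow_le hone hn hd hle⟩

theorem statement1_general {M : Type*} [CommMonoid M] [Preorder M]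
    (hone : ∀ x : M, (1 : M) ≤ x)
    (g : M) (x y : M) (r : ℝ)
    (hrate : IsRegularizedRate g x y r)
    (f : M → ℝ) (hf : IsFunctional f) :
    r * f y ≤ f x :=
  le_of_forall_pos_le_add_mul fun δ hδ => by
    simpa only [mul_assoc] using hrate.mul_le_add hf hone hδ

theorem statement1 {M : Type*} [CommMonoid M] [Preorder M]
    (hmul : ∀ x y z : M, x ≤ y → x * z ≤ y * z)
    (hone : ∀ x : M, (1 : M) ≤ x)
    (g : M) (hg : IsGenerator g) (x y : M) (r : ℝ) (hr : 0 ≤ r)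
    (hrate : IsRegularizedRate g x y r)
    (f : M → ℝ) (hf : IsFunctional f) :
    r * f y ≤ f x :=
  statement1_general hone g x y r hrate f hf
end

section
/- Let g be a generator of M. Then the set {f : M → ℝ : f is a functional on M and f(g) = 1} is a compact subset of the space of all functions M → ℝ equipped with the topology of pointwise convergence (the product topology). -/
lemma funct_one {M : Type*} [CommMonoid M] [Preorder M] {f : M → ℝ}
    (hf : ∀ x y : M, f (x * y) = f x + f y) : f 1 = 0 := by
  have := hf 1 1
  rw [mul_one] at this
  linarith

lemma funct_pow {M : Type*} [CommMonoid M] [Preorder M] {f : M → ℝ}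
    (hf : ∀ x y : M, f (x * y) = f x + f y) (a : M) (n : ℕ) :
    f (a ^ n) = n * f a := by
  induction n with
  | zero => simp [funct_one hf]
  | succ n ih =>
    rw [pow_succ, hf, ih]
    push_cast
    ring

/-- The set of normalized functionals is compact in the topology of pointwise
convergence (the product topology on `M → ℝ`). -/
theorem statement6 {M : Type*} [CommMonoid M] [Preorder M]
    (hmul : ∀ x y z : M, x ≤ y → x * z ≤ y * z)
    (hone : ∀ x : M, (1 : M) ≤ x)
    (g : M) (hg : IsGenerator g) :
    IsCompact {f : M → ℝ | IsFunctional f ∧ f g = 1} := by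
  set N : M → ℕ := fun x => Classical.choose (hg x) with hN
  apply IsCompact.of_isClosed_subset
    (isCompact_univ_pi (fun x : M => isCompact_Icc (a := (0:ℝ)) (b := (N x : ℝ))))
  · have heq : {f : M → ℝ | IsFunctional f ∧ f g = 1} =
        ({f : M → ℝ | ∀ x y : M, f (x * y) = f x + f y} ∩
          {f : M → ℝ | ∀ x y : M, x ≤ y → f x ≤ f y}) ∩ {f : M → ℝ | f g = 1} := by
      ext f; simp [IsFunctional, and_assoc]
    rw [heq]
    refine (IsClosed.inter (IsClosed.inter ?_ ?_) ?_)
    · simp only [Set.setOf_forall]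
      exact isClosed_iInter fun x => isClosed_iInter fun y =>
        isClosed_eq (continuous_apply _) ((continuous_apply x).add (continuous_apply y))
    · simp only [Set.setOf_forall]
      exact isClosed_iInter fun x => isClosed_iInter fun y =>
        isClosed_iInter fun _ => isClosed_le (continuous_apply x) (continuous_apply y)
    · exact isClosed_eq (continuous_apply _) continuous_const
  · intro f hf
    obtain ⟨⟨hadd, hmono⟩, hg1⟩ := hf
    intro x _
    constructor
    · have := hmono 1 x (hone x)
      rw [funct_one hadd] at this
      exact this
    · have hx := Classical.choose_spec (hg x)
      have := hmono _ _ hx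
      rw [funct_pow hadd, hg1, mul_one] at this
      exact this
end

section
/- Let g be a generator of M, and assume the set N = {f : M → ℝ : f is a functional on M and f(g) = 1} is nonempty. Then for every x ∈ M there exist f_min ∈ N and f_max ∈ N such that f_min(x) ≤ f(x) ≤ f_max(x) for every f ∈ N; that is, the infimum and the supremum of {f(x) : f ∈ N} are attained. -/
theorem statement7 {M : Type*} [CommMonoid M] [Preorder M]
    (hmul : ∀ x y z : M, x ≤ y → x * z ≤ y * z)
    (hone : ∀ x : M, (1 : M) ≤ x)
    (g : M) (hg : IsGenerator g)
    (hN : {f : M → ℝ | IsFunctional f ∧ f g = 1}.Nonempty)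
    (x : M) :
    ∃ fmin ∈ {f : M → ℝ | IsFunctional f ∧ f g = 1},
      ∃ fmax ∈ {f : M → ℝ | IsFunctional f ∧ f g = 1},
        ∀ f ∈ {f : M → ℝ | IsFunctional f ∧ f g = 1},
          fmin x ≤ f x ∧ f x ≤ fmax x := by
  classical
  set S : Set (M → ℝ) := {f : M → ℝ | IsFunctional f ∧ f g = 1} with hS
  -- value of functionals on powers of g
  have hpow : ∀ f ∈ S, ∀ k : ℕ, f (g ^ k) = k := by
    rintro f ⟨⟨hadd, _⟩, hfg⟩ k
    induction k with
    | zero =>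
      have h1 : f (1 * 1 : M) = f 1 + f 1 := hadd 1 1
      simp at h1
      simp only [pow_zero, Nat.cast_zero]
      linarith
    | succ n ih =>
      rw [pow_succ, hadd, ih, hfg]
      push_cast; ring
  have hnonneg : ∀ f ∈ S, ∀ y : M, 0 ≤ f y := by
    rintro f hf y
    obtain ⟨⟨hadd, hmono⟩, hfg⟩ := hf
    have h0 : f (1 : M) = 0 := by
      have h1 : f (1 * 1 : M) = f 1 + f 1 := hadd 1 1
      simp at h1; linarith
    have := hmono 1 y (hone y)
    linarith
  -- choose bounds
  choose n hn using hg
  have hsub : S ⊆ Set.univ.pi (fun y : M => Set.Icc (0 : ℝ) (n y)) := by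
    intro f hf y _
    refine ⟨hnonneg f hf y, ?_⟩
    have := hf.1.2 y (g ^ n y) (hn y)
    rw [hpow f hf (n y)] at this
    exact this
  have hKc : IsCompact (Set.univ.pi fun y : M => Set.Icc (0 : ℝ) (n y)) :=
    isCompact_univ_pi fun y => isCompact_Icc
  have hclosed : IsClosed S := by
    have : S = (⋂ a : M, ⋂ b : M, {f : M → ℝ | f (a * b) = f a + f b}) ∩
        ((⋂ a : M, ⋂ b : M, ⋂ _ : a ≤ b, {f : M → ℝ | f a ≤ f b}) ∩
          {f : M → ℝ | f g = 1}) := by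
      ext f
      simp only [hS, Set.mem_setOf_eq, Set.mem_inter_iff, Set.mem_iInter, IsFunctional]
      tauto
    rw [this]
    refine IsClosed.inter ?_ (IsClosed.inter ?_ ?_)
    · exact isClosed_iInter fun a => isClosed_iInter fun b =>
        isClosed_eq (continuous_apply _) ((continuous_apply a).add (continuous_apply b))
    · exact isClosed_iInter fun a => isClosed_iInter fun b => isClosed_iInter fun _ =>
        isClosed_le (continuous_apply _) (continuous_apply _)
    · exact isClosed_eq (continuous_apply _) continuous_const
  have hScomp : IsCompact S := hKc.of_isClosed_subset hclosed hsub
  have hcont : ContinuousOn (fun f : M → ℝ => f x) S := (continuous_apply x).continuousOn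
  obtain ⟨fmin, hfmin, hmin⟩ := hScomp.exists_isMinOn hN hcont
  obtain ⟨fmax, hfmax, hmax⟩ := hScomp.exists_isMaxOn hN hcont
  exact ⟨fmin, hfmin, fmax, hfmax, fun f hf => ⟨hmin hf, hmax hf⟩⟩
end

section
/- For every p ∈ [0,1], the limit as n → ∞ of (1/n)·∑_{m=0}^{n} C(n,m)·p^m·(1−p)^{n−m}·log₂ C(n,m) equals h(p). -/
/-!
Write `b m = C(n,m) p^m (1-p)^(n-m)` for the binomial probabilities. Taking logarithms in the
definition of `b m` and averaging against `b` gives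
`∑ b m log C(n,m) = n h(p) - H(b)`, where `H(b) = -∑ b m log b m` is the entropy of the binomial
distribution. As `b` is a probability vector on `n + 1` points, concavity of `-x log x` gives
`0 ≤ H(b) ≤ log (n + 1) = o(n)`.
-/

/-- The binary entropy function with logarithm to base 2
(with the convention `0 · log₂ 0 = 0`, which holds since `Real.logb 2 0 = 0`). -/
noncomputable def binEntropy2 (p : ℝ) : ℝ :=
  -(p * Real.logb 2 p) - (1 - p) * Real.logb 2 (1 - p)

open Real Finset Filter Topology

lemma sum_negMulLog_le_log_card {ι : Type*} {s : Finset ι} {w : ι → ℝ}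
    (hw₀ : ∀ i ∈ s, 0 ≤ w i) (hw₁ : ∑ i ∈ s, w i = 1) :
    ∑ i ∈ s, negMulLog (w i) ≤ log #s := by
  have hs : s.Nonempty := nonempty_of_sum_ne_zero (f := w) (by rw [hw₁]; exact one_ne_zero)
  have hcard : (0 : ℝ) < #s := by exact_mod_cast hs.card_pos
  have jensen := concaveOn_negMulLog.le_map_sum (t := s) (w := fun _ => 1 / (#s : ℝ)) (p := w)
    (fun _ _ => by positivity) (by simp [hcard.ne']) (fun i hi => Set.mem_Ici.mpr (hw₀ i hi))
  simp only [smul_eq_mul, ← mul_sum, hw₁, mul_one] at jensen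
  have hrhs : negMulLog (1 / (#s : ℝ)) = 1 / #s * log #s := by
    simp [negMulLog, log_inv]
  rw [hrhs] at jensen
  exact le_of_mul_le_mul_left jensen (by positivity)

lemma tendsto_log_natCast_add_one_div_natCast :
    Tendsto (fun n : ℕ => log (n + 1) / n) atTop (𝓝 0) := by
  have h := (tendsto_pow_log_div_mul_add_atTop 1 (-1) 1 one_ne_zero).comp
    (tendsto_atTop_add_const_right _ 1 tendsto_natCast_atTop_atTop)
  refine h.congr fun n => ?_
  simp

lemma binEntropy2_eq_binEntropy_div_log_two (p : ℝ) :
    binEntropy2 p = binEntropy p / log 2 := by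
  simp only [binEntropy2, binEntropy, logb, log_inv]
  ring

noncomputable def binomialWeight (p : ℝ) (n m : ℕ) : ℝ := n.choose m * p ^ m * (1 - p) ^ (n - m)

namespace binomialWeight

variable {p : ℝ} {n m : ℕ}

lemma sum_eq_one (p : ℝ) (n : ℕ) : ∑ m ∈ range (n + 1), binomialWeight p n m = 1 := by
  have h := add_pow p (1 - p) n
  simp only [add_sub_cancel, one_pow] at h
  exact (sum_congr rfl fun m _ => by simp only [binomialWeight]; ring).trans h.symm

lemma sum_mul_eq (p : ℝ) (n : ℕ) :
    ∑ m ∈ range (n + 1), (m : ℝ) * binomialWeight p n m = n * p := by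
  have h := congrArg (Polynomial.eval p) (bernsteinPolynomial.sum_smul ℝ n)
  simp only [Polynomial.eval_finsetSum, bernsteinPolynomial, nsmul_eq_mul, Polynomial.eval_mul,
    Polynomial.eval_natCast, Polynomial.eval_pow, Polynomial.eval_X, Polynomial.eval_sub,
    Polynomial.eval_one] at h
  simpa only [binomialWeight, mul_assoc] using h

lemma nonneg (hp₀ : 0 ≤ p) (hp₁ : p ≤ 1) : 0 ≤ binomialWeight p n m :=
  mul_nonneg (mul_nonneg (Nat.cast_nonneg _) (pow_nonneg hp₀ m)) (pow_nonneg (by linarith) _)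

lemma le_one (hp₀ : 0 ≤ p) (hp₁ : p ≤ 1) (hm : m ∈ range (n + 1)) : binomialWeight p n m ≤ 1 :=
  (single_le_sum (f := binomialWeight p n) (fun _ _ => nonneg hp₀ hp₁) hm).trans_eq
    (sum_eq_one p n)

lemma mul_log_choose (p : ℝ) (n m : ℕ) :
    binomialWeight p n m * log (n.choose m) =
      -negMulLog (binomialWeight p n m) - m * binomialWeight p n m * log p
        - (n - m) * binomialWeight p n m * log (1 - p) := by
  by_cases hw : binomialWeight p n m = 0
  · simp [hw]
  obtain ⟨⟨hc, hpm⟩, hqm⟩ : ((n.choose m : ℝ) ≠ 0 ∧ p ^ m ≠ 0) ∧ (1 - p) ^ (n - m) ≠ 0 := by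
    simpa only [binomialWeight, mul_eq_zero, not_or] using hw
  have hmn : m ≤ n := by
    by_contra! h
    exact hc (by exact_mod_cast Nat.choose_eq_zero_of_lt h)
  have hlog : log (binomialWeight p n m) =
      log (n.choose m) + m * log p + (n - m) * log (1 - p) := by
    rw [binomialWeight, log_mul (mul_ne_zero hc hpm) hqm, log_mul hc hpm, log_pow, log_pow,
      Nat.cast_sub hmn]
  rw [negMulLog, hlog]
  ring

lemma sum_mul_log_choose (p : ℝ) (n : ℕ) :
    ∑ m ∈ range (n + 1), binomialWeight p n m * log (n.choose m) =
      n * binEntropy p - ∑ m ∈ range (n + 1), negMulLog (binomialWeight p n m) := by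
  have hcompl : ∑ m ∈ range (n + 1), ((n : ℝ) - m) * binomialWeight p n m = n * (1 - p) := by
    simp only [sub_mul, sum_sub_distrib, ← mul_sum, sum_eq_one, sum_mul_eq]
    ring
  simp only [mul_log_choose, sum_sub_distrib, sum_neg_distrib, ← sum_mul, sum_mul_eq, hcompl,
    binEntropy_eq_negMulLog_add_negMulLog_one_sub, negMulLog]
  ring

lemma tendsto_inv_mul_sum_mul_log_choose (hp₀ : 0 ≤ p) (hp₁ : p ≤ 1) :
    Tendsto (fun n : ℕ => (1 / (n : ℝ)) *
      ∑ m ∈ range (n + 1), binomialWeight p n m * log (n.choose m)) atTop (𝓝 (binEntropy p)) := by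
  let H : ℕ → ℝ := fun n => ∑ m ∈ range (n + 1), negMulLog (binomialWeight p n m)
  have hH₀ (n : ℕ) : 0 ≤ H n :=
    sum_nonneg fun m hm => negMulLog_nonneg (nonneg hp₀ hp₁) (le_one hp₀ hp₁ hm)
  have hH₁ (n : ℕ) : H n ≤ log (n + 1) := by
    simpa using sum_negMulLog_le_log_card (fun m _ => nonneg hp₀ hp₁) (sum_eq_one p n)
  have hHdiv : Tendsto (fun n => H n / n) atTop (𝓝 0) :=
    squeeze_zero (fun n => div_nonneg (hH₀ n) n.cast_nonneg)
      (fun n => div_le_div_of_nonneg_right (hH₁ n) n.cast_nonneg)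
      tendsto_log_natCast_add_one_div_natCast
  have hlim := (tendsto_const_nhds (x := binEntropy p)).sub hHdiv
  rw [sub_zero] at hlim
  refine hlim.congr' ?_
  filter_upwards [eventually_ne_atTop 0] with n hn
  simp only [H, sum_mul_log_choose]
  field_simp

end binomialWeight

theorem statement8 (p : ℝ) (hp0 : 0 ≤ p) (hp1 : p ≤ 1) :
    Filter.Tendsto (fun n : ℕ =>
      (1 / (n : ℝ)) * ∑ m ∈ Finset.range (n + 1),
        (n.choose m : ℝ) * p ^ m * (1 - p) ^ (n - m) * Real.logb 2 (n.choose m))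
      Filter.atTop (nhds (binEntropy2 p)) := by
  rw [binEntropy2_eq_binEntropy_div_log_two]
  refine ((binomialWeight.tendsto_inv_mul_sum_mul_log_choose hp0 hp1).div_const (log 2)).congr
    fun n => ?_
  simp only [logb, binomialWeight, mul_div_assoc, sum_div]
end

section
/- For every p ∈ [0,1] and every natural number n ≥ 1, the inequality ∑_{m=0}^{n} C(n,m)·p^m·(1−p)^{n−m}·log₂ C(n,m) ≤ n·h(p) holds. -/
open Finset in
lemma mean_binom (p q : ℝ) (n : ℕ) :
    ∑ m ∈ range (n + 1), (m : ℝ) * (n.choose m : ℝ) * p ^ m * q ^ (n - m)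
      = n * p * (p + q) ^ (n - 1) := by
  cases n with
  | zero => simp
  | succ k =>
    rw [Finset.sum_range_succ' _ (k + 1)]
    simp only [Nat.cast_zero, zero_mul, add_zero, Nat.succ_sub_one]
    have key : ∀ m : ℕ, ((m : ℝ) + 1) * ((k + 1).choose (m + 1) : ℝ)
        = (k + 1 : ℝ) * (k.choose m : ℝ) := by
      intro m
      have h := Nat.add_one_mul_choose_eq k m
      have h2 : ((k.succ * k.choose m : ℕ) : ℝ) = ((k.succ.choose m.succ * m.succ : ℕ) : ℝ) := by
        exact_mod_cast congrArg Nat.cast h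
      push_cast at h2
      linarith
    have hc : ∀ m ∈ range (k + 1), ((m : ℕ) + 1 : ℝ) * ((k + 1).choose (m + 1) : ℝ)
        * p ^ (m + 1) * q ^ (k - m)
        = (k + 1 : ℝ) * p * ((k.choose m : ℝ) * p ^ m * q ^ (k - m)) := by
      intro m _
      rw [key m]
      ring
    calc ∑ m ∈ range (k + 1), ((m + 1 : ℕ) : ℝ) * ((k + 1).choose (m + 1) : ℝ)
          * p ^ (m + 1) * q ^ (k + 1 - (m + 1))
        = ∑ m ∈ range (k + 1), (k + 1 : ℝ) * p * ((k.choose m : ℝ) * p ^ m * q ^ (k - m)) := by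
          refine Finset.sum_congr rfl fun m hm => ?_
          push_cast
          exact hc m hm
      _ = (k + 1 : ℝ) * p * (p + q) ^ k := by
          rw [← Finset.mul_sum, add_pow p q k]
          congr 1
          exact Finset.sum_congr rfl fun m _ => by ring
      _ = (↑(k + 1) : ℝ) * p * (p + q) ^ k := by push_cast; ring

theorem statement11 (p : ℝ) (hp0 : 0 ≤ p) (hp1 : p ≤ 1) (n : ℕ) (hn : 1 ≤ n) :
    ∑ m ∈ Finset.range (n + 1),
        (n.choose m : ℝ) * p ^ m * (1 - p) ^ (n - m) * Real.logb 2 (n.choose m) ≤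
      (n : ℝ) * binEntropy2 p := by
  rcases eq_or_lt_of_le hp0 with h0 | h0
  · -- p = 0
    have : ∀ m ∈ Finset.range (n + 1),
        (n.choose m : ℝ) * p ^ m * (1 - p) ^ (n - m) * Real.logb 2 (n.choose m) = 0 := by
      intro m _
      rcases Nat.eq_zero_or_pos m with rfl | hm
      · simp
      · rw [← h0, zero_pow (by omega)]; ring
    rw [Finset.sum_congr rfl this]
    simp [binEntropy2, ← h0]
  rcases eq_or_lt_of_le hp1 with h1 | h1
  · -- p = 1
    have : ∀ m ∈ Finset.range (n + 1),
        (n.choose m : ℝ) * p ^ m * (1 - p) ^ (n - m) * Real.logb 2 (n.choose m) = 0 := by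
      intro m hm
      rw [Finset.mem_range] at hm
      rcases eq_or_lt_of_le (Nat.lt_succ_iff.mp hm) with rfl | hmn
      · simp
      · rw [h1]; rw [show (1:ℝ) - 1 = 0 by ring, zero_pow (by omega)]; ring
    rw [Finset.sum_congr rfl this]
    simp [binEntropy2, h1]
  -- main case 0 < p < 1
  have hq0 : (0:ℝ) < 1 - p := by linarith
  set q := 1 - p with hqdef
  have hpq : p + q = 1 := by rw [hqdef]; ring
  have hsum1 : ∑ m ∈ Finset.range (n + 1), (n.choose m : ℝ) * p ^ m * q ^ (n - m) = 1 := by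
    have h := add_pow p q n
    rw [hpq, one_pow] at h
    calc ∑ m ∈ Finset.range (n + 1), (n.choose m : ℝ) * p ^ m * q ^ (n - m)
        = ∑ m ∈ Finset.range (n + 1), p ^ m * q ^ (n - m) * (n.choose m : ℝ) :=
          Finset.sum_congr rfl fun m _ => by ring
      _ = 1 := h.symm
  have hmean : ∑ m ∈ Finset.range (n + 1), (m : ℝ) * ((n.choose m : ℝ) * p ^ m * q ^ (n - m))
      = n * p := by
    have h := mean_binom p q n
    rw [hpq, one_pow, mul_one] at h
    rw [← h]
    exact Finset.sum_congr rfl fun m _ => by ring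
  set lp := Real.logb 2 p with hlp
  set lq := Real.logb 2 q with hlq
  have step : ∀ m ∈ Finset.range (n + 1),
      (n.choose m : ℝ) * p ^ m * q ^ (n - m) * Real.logb 2 (n.choose m)
        ≤ ((n.choose m : ℝ) * p ^ m * q ^ (n - m)) * (-((m : ℝ) * lp) - ((n : ℝ) - m) * lq) := by
    intro m hm
    rw [Finset.mem_range, Nat.lt_succ_iff] at hm
    have hcp : (0:ℝ) < (n.choose m : ℝ) := by
      exact_mod_cast Nat.choose_pos hm
    have hPpos : (0:ℝ) < (n.choose m : ℝ) * p ^ m * q ^ (n - m) :=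
      mul_pos (mul_pos hcp (pow_pos h0 m)) (pow_pos hq0 _)
    have hP1 : (n.choose m : ℝ) * p ^ m * q ^ (n - m) ≤ 1 := by
      rw [← hsum1]
      refine Finset.single_le_sum (f := fun m => (n.choose m : ℝ) * p ^ m * q ^ (n - m))
        (fun i _ => ?_) (Finset.mem_range.mpr (Nat.lt_succ_iff.mpr hm))
      positivity
    have hlog0 : Real.logb 2 ((n.choose m : ℝ) * p ^ m * q ^ (n - m)) ≤ 0 :=
      Real.logb_nonpos one_lt_two hPpos.le hP1
    have hexp : Real.logb 2 ((n.choose m : ℝ) * p ^ m * q ^ (n - m))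
        = Real.logb 2 (n.choose m) + (m : ℝ) * lp + ((n - m : ℕ) : ℝ) * lq := by
      rw [Real.logb_mul (by positivity) (by positivity),
        Real.logb_mul (by positivity) (by positivity),
        Real.logb_pow, Real.logb_pow]
    have hcast : ((n - m : ℕ) : ℝ) = (n : ℝ) - m := by
      exact Nat.cast_sub hm
    rw [hexp, hcast] at hlog0
    have hkey : Real.logb 2 (n.choose m) ≤ -((m : ℝ) * lp) - ((n : ℝ) - m) * lq := by
      linarith
    exact mul_le_mul_of_nonneg_left hkey hPpos.le
  calc ∑ m ∈ Finset.range (n + 1),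
        (n.choose m : ℝ) * p ^ m * q ^ (n - m) * Real.logb 2 (n.choose m)
      ≤ ∑ m ∈ Finset.range (n + 1),
          ((n.choose m : ℝ) * p ^ m * q ^ (n - m)) * (-((m : ℝ) * lp) - ((n : ℝ) - m) * lq) :=
        Finset.sum_le_sum step
    _ = ∑ m ∈ Finset.range (n + 1),
          ((-lp + lq) * ((m : ℝ) * ((n.choose m : ℝ) * p ^ m * q ^ (n - m)))
            + (-(n : ℝ) * lq) * ((n.choose m : ℝ) * p ^ m * q ^ (n - m))) :=
        Finset.sum_congr rfl fun m _ => by ring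
    _ = (-lp + lq) * (n * p) + (-(n : ℝ) * lq) * 1 := by
        rw [Finset.sum_add_distrib, ← Finset.mul_sum, ← Finset.mul_sum, hmean, hsum1]
    _ = (n : ℝ) * binEntropy2 p := by
        unfold binEntropy2
        rw [← hqdef, ← hlp, ← hlq]
        ring
end
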